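/- Compatibility of the Kronecker coproduct with the canonical embeddings: let a, b : ℕ → ℕ and for n ∈ ℕ write A_n(a) := Matrix (Π i : Fin n, Fin (a i)) ℂ. Let ψ_a^{(n)} : A_n(a) → A_{n+1}(a) be the unital *-embedding X ↦ X ⊗ I, i.e. (ψ_a^{(n)} X)_{J,K} = X_{J∘castSucc, K∘castSucc} if J(n) = K(n) and 0 otherwise, and define ψ_b^{(n)} and ψ_{a·b}^{(n)} (on Matrix (Π i : Fin n, Fin (a i) × Fin (b i)) ℂ) analogously. Let Φ_n denote the level-n Kronecker coproduct isomorphism from Matrix (Π i : Fin n, Fin (a i) × Fin (b i)) ℂ onto Matrix (Π i : Fin n, Fin (a i)) ℂ ⊗[ℂ] Matrix (Π i : Fin n, Fin (b i)) ℂ determined on matrix units by E_{J,K} ↦ E_{J₁,K₁} ⊗ E_{J₂,K₂} (splitting each index J i = (J₁ i, J₂ i)). Then (ψ_a^{(n)} ⊗ ψ_b^{(n)}) ∘ Φ_n = Φ_{n+1} ∘ ψ_{a·b}^{(n)}. -/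

import Mathlib

/-!
Both sides are linear, so it suffices to compare them on matrix units. The embedding
`X ↦ X ⊗ I` sends `E_{J,K}` to `∑ₓ E_{(J,x),(K,x)}`, and appending a pair `(x, y)` to a
multi-index of pairs appends `x` and `y` to its two components; hence both sides send `E_{J,K}`
to `∑ₓ ∑ᵧ E_{(J₁,x),(K₁,x)} ⊗ E_{(J₂,y),(K₂,y)}`.
-/

open Matrix
open scoped TensorProduct

namespace Fin

variable {n : ℕ} {α β : Fin (n + 1) → Type*}

theorem snoc_fst (p : Π i : Fin n, α i.castSucc × β i.castSucc)
    (x : α (last n) × β (last n)) :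
    (fun i => (snoc (α := fun i => α i × β i) p x i).1) = snoc (fun i => (p i).1) x.1 := by
  funext i
  induction i using lastCases <;> simp

theorem snoc_snd (p : Π i : Fin n, α i.castSucc × β i.castSucc)
    (x : α (last n) × β (last n)) :
    (fun i => (snoc (α := fun i => α i × β i) p x i).2) = snoc (fun i => (p i).2) x.2 := by
  funext i
  induction i using lastCases <;> simp

end Fin

namespace Matrix

variable {n : ℕ} {κ : ℕ → Type*} {R : Type*}

/-- The embedding `X ↦ X ⊗ I` of the `n`-th stage into the `(n + 1)`-st, the new tensor factor
being the last coordinate of the multi-index. -/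
def ampliate [Zero R] [DecidableEq (κ n)]
    (X : Matrix (Π i : Fin n, κ i) (Π i : Fin n, κ i) R) :
    Matrix (Π i : Fin (n + 1), κ i) (Π i : Fin (n + 1), κ i) R :=
  of fun J K => if J (Fin.last n) = K (Fin.last n) then X (Fin.init J) (Fin.init K) else 0

theorem ampliate_single [AddCommMonoid R] [∀ i, DecidableEq (κ i)] [Fintype (κ n)]
    (J K : Π i : Fin n, κ i) (c : R) :
    ampliate (single J K c) =
      ∑ x : κ n,
        single (Fin.snoc (α := fun i => κ i) J x) (Fin.snoc (α := fun i => κ i) K x) c := by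
  ext J' K'
  induction J' using Fin.snocCases with | _ J' y => ?_
  induction K' using Fin.snocCases with | _ K' z => ?_
  simp only [ampliate, of_apply, Fin.snoc_last, Fin.init_snoc, sum_apply, single_apply,
    Fin.snoc_inj]
  rw [Fintype.sum_eq_single (α := κ n) y fun x hx => if_neg fun h => hx h.1.2]
  by_cases hyz : y = z <;> simp [hyz]

end Matrix

/-- Compatibility of the Kronecker coproduct with the canonical
embeddings `ψ^{(n)} : X ↦ X ⊗ I` of the finite stages of the UHF algebras:
`(ψ_a^{(n)} ⊗ ψ_b^{(n)}) ∘ Φₙ = Φₙ₊₁ ∘ ψ_{a·b}^{(n)}`. -/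
theorem kroneckerCoproduct_compat_embeddings (n : ℕ) (a b : ℕ → ℕ)
    (ψa : Matrix (Π i : Fin n, Fin (a i)) (Π i : Fin n, Fin (a i)) ℂ →ₗ[ℂ]
      Matrix (Π i : Fin (n + 1), Fin (a i)) (Π i : Fin (n + 1), Fin (a i)) ℂ)
    (hψa : ∀ X (J K : Π i : Fin (n + 1), Fin (a i)),
      ψa X J K = if J (Fin.last n) = K (Fin.last n) then
        X (fun i => J i.castSucc) (fun i => K i.castSucc) else 0)
    (ψb : Matrix (Π i : Fin n, Fin (b i)) (Π i : Fin n, Fin (b i)) ℂ →ₗ[ℂ]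
      Matrix (Π i : Fin (n + 1), Fin (b i)) (Π i : Fin (n + 1), Fin (b i)) ℂ)
    (hψb : ∀ X (J K : Π i : Fin (n + 1), Fin (b i)),
      ψb X J K = if J (Fin.last n) = K (Fin.last n) then
        X (fun i => J i.castSucc) (fun i => K i.castSucc) else 0)
    (ψab : Matrix (Π i : Fin n, Fin (a i) × Fin (b i)) (Π i : Fin n, Fin (a i) × Fin (b i)) ℂ
      →ₗ[ℂ] Matrix (Π i : Fin (n + 1), Fin (a i) × Fin (b i))
        (Π i : Fin (n + 1), Fin (a i) × Fin (b i)) ℂ)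
    (hψab : ∀ X (J K : Π i : Fin (n + 1), Fin (a i) × Fin (b i)),
      ψab X J K = if J (Fin.last n) = K (Fin.last n) then
        X (fun i => J i.castSucc) (fun i => K i.castSucc) else 0)
    (Φn : Matrix (Π i : Fin n, Fin (a i) × Fin (b i)) (Π i : Fin n, Fin (a i) × Fin (b i)) ℂ
      →ₗ[ℂ] (Matrix (Π i : Fin n, Fin (a i)) (Π i : Fin n, Fin (a i)) ℂ ⊗[ℂ]
        Matrix (Π i : Fin n, Fin (b i)) (Π i : Fin n, Fin (b i)) ℂ))
    (hΦn : ∀ J K : Π i : Fin n, Fin (a i) × Fin (b i),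
      Φn (Matrix.single J K 1) =
        Matrix.single (fun i => (J i).1) (fun i => (K i).1) (1 : ℂ) ⊗ₜ[ℂ]
          Matrix.single (fun i => (J i).2) (fun i => (K i).2) (1 : ℂ))
    (Φn1 : Matrix (Π i : Fin (n + 1), Fin (a i) × Fin (b i))
        (Π i : Fin (n + 1), Fin (a i) × Fin (b i)) ℂ
      →ₗ[ℂ] (Matrix (Π i : Fin (n + 1), Fin (a i)) (Π i : Fin (n + 1), Fin (a i)) ℂ ⊗[ℂ]
        Matrix (Π i : Fin (n + 1), Fin (b i)) (Π i : Fin (n + 1), Fin (b i)) ℂ))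
    (hΦn1 : ∀ J K : Π i : Fin (n + 1), Fin (a i) × Fin (b i),
      Φn1 (Matrix.single J K 1) =
        Matrix.single (fun i => (J i).1) (fun i => (K i).1) (1 : ℂ) ⊗ₜ[ℂ]
          Matrix.single (fun i => (J i).2) (fun i => (K i).2) (1 : ℂ)) :
    ∀ X, (TensorProduct.map ψa ψb) (Φn X) = Φn1 (ψab X) := by
  have ψa_eq : ∀ X, ψa X = ampliate (κ := fun i => Fin (a i)) X := fun X => by
    ext J K; exact hψa X J K
  have ψb_eq : ∀ X, ψb X = ampliate (κ := fun i => Fin (b i)) X := fun X => by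
    ext J K; exact hψb X J K
  have ψab_eq : ∀ X, ψab X = ampliate (κ := fun i => Fin (a i) × Fin (b i)) X := fun X => by
    ext J K; exact hψab X J K
  have on_units : TensorProduct.map ψa ψb ∘ₗ Φn = Φn1 ∘ₗ ψab :=
    ext_linearMap _ fun J K => LinearMap.ext_ring <| by
      simp only [LinearMap.comp_apply, singleLinearMap_apply, hΦn, TensorProduct.map_tmul,
        ψa_eq, ψb_eq, ψab_eq, ampliate_single (κ := fun i => Fin (a i)),
        ampliate_single (κ := fun i => Fin (b i)),
        ampliate_single (κ := fun i => Fin (a i) × Fin (b i)), map_sum, hΦn1,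
        TensorProduct.sum_tmul, TensorProduct.tmul_sum, Fintype.sum_prod_type,
        Fin.snoc_fst (α := fun i => Fin (a i)) (β := fun i => Fin (b i)),
        Fin.snoc_snd (α := fun i => Fin (a i)) (β := fun i => Fin (b i))]
      rw [Finset.sum_comm]
  exact LinearMap.congr_fun on_units
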